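/- arXiv:2002.11154 — 5 statements merged into one kernel-verified Lean document; each statement's English description precedes it below -/
import Mathlib

section
/- For j = 1,…,q let (N_j,ρ_j) be a proper geodesic metric space with basepoint b_j such that every horofunction of (N_j,ρ_j) is a Busemann point and δ(h_j,h_j') = ∞ for every pair of distinct Busemann points h_j ≠ h_j' of (N_j,ρ_j). Then every horofunction of the product (∏_{j=1}^q N_j, d_∞) with basepoint b = (b_1,…,b_q) is a Busemann point. -/
open Filter Topology

noncomputable section

/-- `horo b y z = d(z,y) - d(b,y)`, the function `h_y` with basepoint `b`. -/
def horo {M : Type*} [MetricSpace M] (b y z : M) : ℝ := dist z y - dist b y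

/-- `HoroLim b y h` : the functions `h_{y^n}` (with basepoint `b`) converge pointwise to `h`. -/
def HoroLim {M : Type*} [MetricSpace M] (b : M) (y : ℕ → M) (h : M → ℝ) : Prop :=
  ∀ z : M, Filter.Tendsto (fun n => horo b (y n) z) Filter.atTop (nhds (h z))

/-- `h` is a horofunction of `(M,d)` with basepoint `b`. -/
def IsHorofunction {M : Type*} [MetricSpace M] (b : M) (h : M → ℝ) : Prop :=
  (∃ y : ℕ → M, HoroLim b y h) ∧ ∀ y : M, h ≠ horo b y

/-- A metric space is geodesic: any two points are joined by a geodesic path. -/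
def IsGeodesicSpace (M : Type*) [MetricSpace M] : Prop :=
  ∀ x y : M, ∃ γ : ℝ → M, γ 0 = x ∧ γ (dist x y) = y ∧
    ∀ s ∈ Set.Icc (0 : ℝ) (dist x y), ∀ t ∈ Set.Icc (0 : ℝ) (dist x y),
      dist (γ s) (γ t) = |s - t|

/-- Almost geodesic sequence. -/
def IsAlmostGeodesicSeq {M : Type*} [MetricSpace M] (y : ℕ → M) : Prop :=
  Filter.Tendsto (fun n => dist (y n) (y 0)) Filter.atTop Filter.atTop ∧
  ∀ ε > (0 : ℝ), ∃ N : ℕ, ∀ m k : ℕ, N ≤ k → k ≤ m →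
    dist (y m) (y k) + dist (y k) (y 0) - dist (y m) (y 0) < ε

/-- A Busemann point: a horofunction that is the limit of an almost geodesic sequence. -/
def IsBusemannPoint {M : Type*} [MetricSpace M] (b : M) (h : M → ℝ) : Prop :=
  IsHorofunction b h ∧ ∃ y : ℕ → M, IsAlmostGeodesicSeq y ∧ HoroLim b y h

/-- Detour cost `H(h₁,h₂)`, with values in `EReal` (so it may be `⊤ = ∞`). -/
def detourCost {M : Type*} [MetricSpace M] (b : M) (h₁ h₂ : M → ℝ) : EReal :=
  ⨅ z : {z : ℕ → M // HoroLim b z h₁},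
    Filter.liminf (fun n => ((dist b (z.1 n) + h₂ (z.1 n) : ℝ) : EReal)) Filter.atTop

/-- Detour distance `δ(h₁,h₂) = H(h₁,h₂) + H(h₂,h₁)`. -/
def detourDist {M : Type*} [MetricSpace M] (b : M) (h₁ h₂ : M → ℝ) : EReal :=
  detourCost b h₁ h₂ + detourCost b h₂ h₁

/-!
Let `y n` converge to a horofunction `h` of the sup-product. Then `dist b (y n) → ∞`, and along a
subsequence the lag `dist b (y n) - dist (b j) (y n j)` of each coordinate tends to some
`α j ∈ [0, ∞]`, vanishing for some `j`. Hence `h z = max_{α j < ∞} (h_j (z j) - α j)`, where the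
`h_j` are horofunctions, so Busemann points, of the factors. Reparametrize an almost geodesic
sequence converging to `h_j` as a path `W_j` with `dist (b j) (W_j r) = r`, running along geodesic
segments between its points. The points `(W_j (n - α j))_j` lie at distance `n` from `b` and move at
asymptotically unit speed in every coordinate, so they form an almost geodesic sequence of the
product, and it converges to `h`.
-/

section

variable {M : Type*} [MetricSpace M]

lemma lipschitzWith_horo (b y : M) : LipschitzWith 1 (horo b y) :=
  LipschitzWith.of_dist_le_mul fun z w => by
    simpa [horo, Real.dist_eq] using abs_dist_sub_le z w y

lemma abs_horo_le (b y z : M) : |horo b y z| ≤ dist z b :=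
  abs_dist_sub_le z b y

lemma continuous_horo_left (b z : M) : Continuous fun y => horo b y z :=
  (continuous_const.dist continuous_id).sub (continuous_const.dist continuous_id)

lemma HoroLim.comp {b : M} {y : ℕ → M} {h : M → ℝ} (hy : HoroLim b y h) {φ : ℕ → ℕ}
    (hφ : Tendsto φ atTop atTop) : HoroLim b (y ∘ φ) h :=
  fun z => (hy z).comp hφ

lemma HoroLim.tendsto_horo_of_tendsto {b : M} {y : ℕ → M} {h : M → ℝ} (hy : HoroLim b y h)
    {z : ℕ → M} {w : M} (hz : Tendsto z atTop (𝓝 w)) :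
    Tendsto (fun n => horo b (y n) (z n)) atTop (𝓝 (h w)) := by
  have hclose : Tendsto (fun n => horo b (y n) (z n) - horo b (y n) w) atTop (𝓝 0) :=
    squeeze_zero_norm (fun n => (lipschitzWith_horo b (y n)).dist_le_mul (z n) w |>.trans_eq
      (one_mul _)) (tendsto_iff_dist_tendsto_zero.1 hz)
  simpa using hclose.add (hy w)

lemma cauchySeq_of_eventually_le_of_le_add {u : ℕ → ℝ} {B : ℝ} (hB : ∀ᶠ n in atTop, u n ≤ B)
    (hu : ∀ ε > 0, ∀ᶠ k in atTop, ∀ m ≥ k, u k ≤ u m + ε) : CauchySeq u := by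
  rw [Metric.cauchySeq_iff']
  intro ε hε
  obtain ⟨N, hN⟩ := eventually_atTop.1 (hB.and (hu (ε / 2) (by linarith)))
  have hbdd : BddAbove (u '' Set.Ici N) := ⟨B, by rintro _ ⟨n, hn, rfl⟩; exact (hN n hn).1⟩
  obtain ⟨_, ⟨k, hk, rfl⟩, hkS⟩ := exists_lt_of_lt_csSup (Set.Nonempty.image u Set.nonempty_Ici)
    (show sSup (u '' Set.Ici N) - ε / 2 < sSup (u '' Set.Ici N) by linarith)
  refine ⟨k, fun n hn => ?_⟩
  have hnS : u n ≤ sSup (u '' Set.Ici N) := le_csSup hbdd ⟨n, le_trans hk hn, rfl⟩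
  have hkn := (hN k hk).2 n hn
  rw [Real.dist_eq, abs_sub_lt_iff]
  constructor <;> linarith

def IsAsymptoticallyShort {ι : Type*} [Preorder ι] (t : ι → ℝ) (x : ι → M) : Prop :=
  ∀ ε > 0, ∀ᶠ k in atTop, ∀ m ≥ k, dist (x k) (x m) ≤ t m - t k + ε

namespace IsAsymptoticallyShort

variable {ι κ : Type*} [Preorder ι] [Preorder κ] {t : ι → ℝ} {x : ι → M}

lemma comp (hx : IsAsymptoticallyShort t x) {u : κ → ι} (hu : Monotone u)
    (hu' : Tendsto u atTop atTop) : IsAsymptoticallyShort (t ∘ u) (x ∘ u) := fun ε hε =>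
  (hu'.eventually (hx ε hε)).mono fun _ hk m hm => hk (u m) (hu hm)

lemma add_const (hx : IsAsymptoticallyShort t x) (c : ℝ) :
    IsAsymptoticallyShort (fun i => t i + c) x := by
  simpa [IsAsymptoticallyShort] using hx

end IsAsymptoticallyShort

namespace IsAlmostGeodesicSeq

variable {x : ℕ → M}

lemma eventually_dist_add_dist_sub_lt (hx : IsAlmostGeodesicSeq x) {ε : ℝ} (hε : 0 < ε) :
    ∀ᶠ k in atTop, ∀ m ≥ k, dist (x m) (x k) + dist (x k) (x 0) - dist (x m) (x 0) < ε := by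
  obtain ⟨N, hN⟩ := hx.2 ε hε
  exact eventually_atTop.2 ⟨N, fun k hk m hm => hN m k hk hm⟩

lemma cauchySeq_dist_sub_dist (hx : IsAlmostGeodesicSeq x) (b : M) :
    CauchySeq fun n => dist (x n) (x 0) - dist b (x n) := by
  refine cauchySeq_of_eventually_le_of_le_add (B := dist (x 0) b) (Eventually.of_forall
    fun n => by linarith [dist_triangle (x n) b (x 0), dist_comm b (x 0), dist_comm b (x n)])
    fun ε hε => (hx.eventually_dist_add_dist_sub_lt hε).mono fun k hk m hm => ?_
  linarith [hk m hm, dist_triangle b (x k) (x m), dist_comm (x m) (x k)]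

lemma tendsto_dist (hx : IsAlmostGeodesicSeq x) (b : M) :
    Tendsto (fun n => dist b (x n)) atTop atTop :=
  tendsto_atTop_mono (fun n => by linarith [dist_triangle (x n) b (x 0), dist_comm b (x n)])
    (tendsto_atTop_add_const_right _ (-dist b (x 0)) hx.1)

lemma isAsymptoticallyShort (hx : IsAlmostGeodesicSeq x) (b : M) :
    IsAsymptoticallyShort (fun n => dist b (x n)) x := by
  intro ε hε
  obtain ⟨N, hN⟩ := Metric.cauchySeq_iff.1 (hx.cauchySeq_dist_sub_dist b) (ε / 2) (by linarith)
  filter_upwards [hx.eventually_dist_add_dist_sub_lt (half_pos hε), eventually_ge_atTop N]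
    with k hk hkN m hm
  have hkm := hN m (hkN.trans hm) k hkN
  rw [Real.dist_eq, abs_sub_lt_iff] at hkm
  linarith [hk m hm, dist_comm (x m) (x k)]

end IsAlmostGeodesicSeq

lemma isAlmostGeodesicSeq_of_isAsymptoticallyShort {x : ℕ → M} {t : ℕ → ℝ}
    (ht : Tendsto t atTop atTop) (hlow : ∀ᶠ k in atTop, ∀ m ≥ k, t m - t k ≤ dist (x k) (x m))
    (hup : IsAsymptoticallyShort t x) : IsAlmostGeodesicSeq x := by
  obtain ⟨K, hK⟩ := eventually_atTop.1 hlow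
  have hbdd : ∀ m ≥ K, t m - dist (x m) (x 0) ≤ t K + dist (x K) (x 0) := fun m hm => by
    linarith [hK K le_rfl m hm, dist_triangle (x K) (x 0) (x m), dist_comm (x 0) (x m)]
  have hcauchy : CauchySeq fun n => t n - dist (x n) (x 0) :=
    cauchySeq_of_eventually_le_of_le_add (eventually_atTop.2 ⟨K, hbdd⟩) fun ε hε =>
      (hup ε hε).mono fun k hk m hm => by
        linarith [hk m hm, dist_triangle (x m) (x k) (x 0), dist_comm (x m) (x k)]
  refine ⟨tendsto_atTop_mono' atTop (eventually_atTop.2 ⟨K, fun m hm => ?_⟩)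
    (tendsto_atTop_add_const_right _ (-(t K + dist (x K) (x 0))) ht), fun ε hε => ?_⟩
  · linarith [hbdd m hm]
  obtain ⟨N, hN⟩ := Metric.cauchySeq_iff.1 hcauchy (ε / 2) (by linarith)
  obtain ⟨N', hN'⟩ := eventually_atTop.1 (hup (ε / 2) (by linarith))
  refine ⟨max N N', fun m k hk hkm => ?_⟩
  have hkm' := hN m ((le_max_left _ _).trans (hk.trans hkm)) k ((le_max_left _ _).trans hk)
  rw [Real.dist_eq, abs_sub_lt_iff] at hkm'
  linarith [hN' k ((le_max_right _ _).trans hk) m hkm, dist_comm (x m) (x k)]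

lemma tendsto_dist_atTop_of_horoLim [ProperSpace M] {b : M} {y : ℕ → M} {h : M → ℝ}
    (hy : HoroLim b y h) (hh : ∀ x, h ≠ horo b x) :
    Tendsto (fun n => dist b (y n)) atTop atTop := by
  by_contra hdiv
  rw [tendsto_atTop] at hdiv
  push Not at hdiv
  obtain ⟨C, hC⟩ := hdiv
  obtain ⟨w, -, φ, hφ, hw⟩ := (isCompact_closedBall b C).tendsto_subseq'
    (hC.mono fun n hn => by rw [Metric.mem_closedBall, dist_comm]; exact hn.le)
  exact hh w (funext fun z => tendsto_nhds_unique ((hy z).comp hφ.tendsto_atTop)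
    (((continuous_horo_left b z).tendsto w).comp hw))

lemma IsGeodesicSpace.exists_dist_eq (hM : IsGeodesicSpace M) (x y : M) {r : ℝ} (hr₀ : 0 ≤ r)
    (hr : r ≤ dist x y) : ∃ z, dist x z = r ∧ dist z y = dist x y - r := by
  obtain ⟨γ, h0, h1, hγ⟩ := hM x y
  have hstart := hγ 0 ⟨le_rfl, dist_nonneg⟩ r ⟨hr₀, hr⟩
  have hend := hγ r ⟨hr₀, hr⟩ (dist x y) ⟨dist_nonneg, le_rfl⟩
  rw [h0] at hstart
  rw [h1] at hend
  exact ⟨γ r, by rw [hstart, zero_sub, abs_neg, abs_of_nonneg hr₀],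
    by rw [hend, abs_of_nonpos (by linarith)]; ring⟩

/-- If `g = horo b x`, moving one unit from `x` towards the far points `w n` would lower `g`
by one, whereas `horo b x` rises by one. -/
lemma isHorofunction_of_tendsto_dist [ProperSpace M] (hM : IsGeodesicSpace M) {b : M}
    {w : ℕ → M} {g : M → ℝ} (hw : HoroLim b w g)
    (hd : Tendsto (fun n => dist b (w n)) atTop atTop) : IsHorofunction b g := by
  refine ⟨⟨w, hw⟩, fun x hgx => ?_⟩
  have hfar : ∀ᶠ n in atTop, 1 ≤ dist x (w n) :=
    (hd.eventually_ge_atTop (dist b x + 1)).mono fun n hn => by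
      linarith [dist_triangle b x (w n)]
  have : Nonempty M := ⟨x⟩
  choose! z hz1 hz2 using fun n (hn : 1 ≤ dist x (w n)) =>
    hM.exists_dist_eq x (w n) zero_le_one hn
  obtain ⟨zl, -, ψ, hψ, hzl⟩ := (isCompact_closedBall x 1).tendsto_subseq'
    (hfar.frequently.mono fun n hn => by rw [Metric.mem_closedBall, dist_comm, hz1 n hn])
  have hfarψ := hψ.tendsto_atTop.eventually hfar
  have hgzl : g zl = g x - 1 :=
    tendsto_nhds_unique ((hw.comp hψ.tendsto_atTop).tendsto_horo_of_tendsto hzl)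
      ((((hw x).comp hψ.tendsto_atTop).sub_const 1).congr' (hfarψ.mono fun n hn => by
        simp only [Function.comp_apply, horo, hz2 _ hn]; ring))
  have hxzl : dist x zl = 1 := tendsto_nhds_unique (tendsto_const_nhds.dist hzl)
    (tendsto_const_nhds.congr' (hfarψ.mono fun n hn => (hz1 _ hn).symm))
  rw [hgx] at hgzl
  simp only [horo, dist_self, dist_comm zl x, hxzl] at hgzl
  linarith

lemma exists_le_lt_succ_of_tendsto {s : ℕ → ℝ} (hs : Tendsto s atTop atTop) {r : ℝ}
    (hr : s 0 ≤ r) : ∃ i, s i ≤ r ∧ r < s (i + 1) := by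
  by_contra! H
  have hle : ∀ i, s i ≤ r := fun i => by
    induction i with
    | zero => exact hr
    | succ i ih => exact H i ih
  obtain ⟨i, hi⟩ := (hs.eventually_gt_atTop r).exists
  exact (hle i).not_gt hi

lemma exists_dist_eq_of_isometric_on_Icc {γ : ℝ → M} {D : ℝ} (hD : 0 ≤ D)
    (hγ : ∀ s ∈ Set.Icc 0 D, ∀ t ∈ Set.Icc 0 D, dist (γ s) (γ t) = |s - t|) (b : M) {r : ℝ}
    (hr : r ∈ Set.Icc (dist b (γ 0)) (dist b (γ D))) :
    ∃ p ∈ Set.Icc 0 D, dist b (γ p) = r :=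
  intermediate_value_Icc hD ((continuous_const.dist continuous_id).comp_continuousOn
    (LipschitzOnWith.of_dist_le_mul (K := 1) fun p hp q hq => by
      simp [hγ p hp q hq, Real.dist_eq]).continuousOn) hr

/-- `W r` is the point at distance `r` from `b` on a geodesic segment from `x (σ r)` to
`x (σ r + 1)`, the same segment for all `r` of the same stage `σ r`. -/
structure IsStagedPath (b : M) (x : ℕ → M) (σ : ℝ → ℕ) (W : ℝ → M) : Prop where
  stage_le : ∀ r ≥ dist b (x 0), dist b (x (σ r)) ≤ r
  lt_stage_succ : ∀ r ≥ dist b (x 0), r < dist b (x (σ r + 1))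
  dist_eq : ∀ r ≥ dist b (x 0), dist b (W r) = r
  dist_add_dist : ∀ r ≥ dist b (x 0),
    dist (x (σ r)) (W r) + dist (W r) (x (σ r + 1)) = dist (x (σ r)) (x (σ r + 1))
  dist_of_stage_eq : ∀ r ≥ dist b (x 0), ∀ r' ≥ dist b (x 0), σ r = σ r' →
    dist (W r) (W r') = |dist (x (σ r)) (W r) - dist (x (σ r)) (W r')|

lemma exists_isStagedPath (hM : IsGeodesicSpace M) (b : M) {x : ℕ → M}
    (hx : Tendsto (fun i => dist b (x i)) atTop atTop) : ∃ σ W, IsStagedPath b x σ W := by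
  choose γ hγ0 hγ1 hγ using fun i => hM (x i) (x (i + 1))
  have hstart : ∀ i, ∀ p ∈ Set.Icc 0 (dist (x i) (x (i + 1))), dist (x i) (γ i p) = p :=
    fun i p hp => by
      rw [← hγ0 i, hγ i 0 ⟨le_rfl, dist_nonneg⟩ p hp, zero_sub, abs_neg, abs_of_nonneg hp.1]
  have hend : ∀ i, ∀ p ∈ Set.Icc 0 (dist (x i) (x (i + 1))),
      dist (γ i p) (x (i + 1)) = dist (x i) (x (i + 1)) - p := fun i p hp => by
    conv_lhs => rw [← hγ1 i]
    rw [hγ i p hp _ ⟨dist_nonneg, le_rfl⟩, abs_of_nonpos (by linarith [hp.2])]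
    ring
  choose! σ hσ₁ hσ₂ using fun r (hr : dist b (x 0) ≤ r) => exists_le_lt_succ_of_tendsto hx hr
  choose! P hPI hP using fun r (hr : dist b (x 0) ≤ r) =>
    exists_dist_eq_of_isometric_on_Icc dist_nonneg (hγ (σ r)) b (r := r)
      (by rw [hγ0, hγ1]; exact ⟨hσ₁ r hr, (hσ₂ r hr).le⟩)
  refine ⟨σ, fun r => γ (σ r) (P r), hσ₁, hσ₂, hP, fun r hr => ?_, fun r hr r' hr' hrr' => ?_⟩
  · rw [hstart _ _ (hPI r hr), hend _ _ (hPI r hr)]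
    ring
  · have hPI' := hPI r' hr'
    rw [← hrr'] at hPI' ⊢
    rw [hγ _ _ (hPI r hr) _ hPI', hstart _ _ (hPI r hr), hstart _ _ hPI']

namespace IsStagedPath

variable {b : M} {x : ℕ → M} {σ : ℝ → ℕ} {W : ℝ → M}

lemma le_stage (hW : IsStagedPath b x σ W) (hs : Monotone fun i => dist b (x i)) {r : ℝ}
    (hr : dist b (x 0) ≤ r) {N : ℕ} (hN : dist b (x N) ≤ r) : N ≤ σ r := by
  by_contra! h
  exact (hW.lt_stage_succ r hr).not_ge ((hs h).trans hN)

lemma stage_mono (hW : IsStagedPath b x σ W) (hs : Monotone fun i => dist b (x i)) {r r' : ℝ}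
    (hr : dist b (x 0) ≤ r) (hrr' : r ≤ r') : σ r ≤ σ r' :=
  hW.le_stage hs (hr.trans hrr') ((hW.stage_le r hr).trans hrr')

lemma tendsto_stage (hW : IsStagedPath b x σ W) (hs : Monotone fun i => dist b (x i)) :
    Tendsto σ atTop atTop :=
  tendsto_atTop.2 fun N => (eventually_ge_atTop (max (dist b (x 0)) (dist b (x N)))).mono
    fun _ hr => hW.le_stage hs (le_of_max_le_left hr) (le_of_max_le_right hr)

lemma dist_stage_le (hW : IsStagedPath b x σ W) {r : ℝ} (hr : dist b (x 0) ≤ r) {δ : ℝ}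
    (hδ : dist (x (σ r)) (x (σ r + 1)) ≤ dist b (x (σ r + 1)) - dist b (x (σ r)) + δ) :
    r - dist b (x (σ r)) ≤ dist (x (σ r)) (W r) ∧
      dist (x (σ r)) (W r) ≤ r - dist b (x (σ r)) + δ ∧
      dist (W r) (x (σ r + 1)) ≤ dist b (x (σ r + 1)) - r + δ := by
  have h1 := hW.dist_eq r hr
  have h2 := hW.dist_add_dist r hr
  have h3 := dist_triangle b (x (σ r)) (W r)
  have h4 := dist_triangle b (W r) (x (σ r + 1))
  refine ⟨?_, ?_, ?_⟩ <;> linarith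

lemma isAsymptoticallyShort (hW : IsStagedPath b x σ W) (hs : Monotone fun i => dist b (x i))
    (hx : IsAsymptoticallyShort (fun i => dist b (x i)) x) : IsAsymptoticallyShort id W := by
  intro ε hε
  obtain ⟨N, hN⟩ := eventually_atTop.1 (hx (ε / 3) (by linarith))
  filter_upwards [eventually_ge_atTop (dist b (x 0)),
    (hW.tendsto_stage hs).eventually_ge_atTop N] with r hr hrN r' hr'
  have hr'₀ := hr.trans hr'
  have hstage := hW.stage_mono hs hr hr'
  obtain ⟨h1, h2, h3⟩ := hW.dist_stage_le hr (hN _ hrN _ (Nat.le_succ _))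
  obtain ⟨h1', h2', h3'⟩ := hW.dist_stage_le hr'₀ (hN _ (hrN.trans hstage) _ (Nat.le_succ _))
  simp only [id]
  rcases hstage.eq_or_lt with heq | hlt
  · rw [hW.dist_of_stage_eq r hr r' hr'₀ heq, abs_sub_le_iff]
    rw [← heq] at h1' h2'
    constructor <;> linarith
  · have hmid := hN _ (hrN.trans (Nat.le_succ _)) _ hlt
    linarith [dist_triangle4 (W r) (x (σ r + 1)) (x (σ r')) (W r')]

/-- Along a stage the path is squeezed between the horofunctions of the two ends. -/
lemma tendsto_horo (hW : IsStagedPath b x σ W) (hs : Monotone fun i => dist b (x i))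
    (hx : IsAsymptoticallyShort (fun i => dist b (x i)) x) {g : M → ℝ} (hg : HoroLim b x g)
    (z : M) : Tendsto (fun r => horo b (W r) z) atTop (𝓝 (g z)) := by
  rw [Metric.tendsto_nhds]
  intro ε hε
  have hσ := hW.tendsto_stage hs
  filter_upwards [eventually_ge_atTop (dist b (x 0)),
    hσ.eventually ((hx (ε / 2) (by linarith)).mono fun i hi => hi (i + 1) (Nat.le_succ i)),
    hσ.eventually (Metric.tendsto_nhds.1 (hg z) (ε / 2) (by linarith)),
    hσ.eventually (Metric.tendsto_nhds.1 ((hg z).comp (tendsto_add_atTop_nat 1)) (ε / 2)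
      (by linarith))] with r hr hδ hlo hhi
  obtain ⟨-, h2, h3⟩ := hW.dist_stage_le hr hδ
  simp only [Function.comp_apply, Real.dist_eq, abs_sub_lt_iff, horo] at hlo hhi ⊢
  have := hW.dist_eq r hr
  constructor <;>
    linarith [dist_triangle z (x (σ r)) (W r), dist_triangle z (W r) (x (σ r + 1))]

end IsStagedPath

theorem IsAlmostGeodesicSeq.exists_path (hM : IsGeodesicSpace M) {x : ℕ → M}
    (hx : IsAlmostGeodesicSeq x) (b : M) {g : M → ℝ} (hg : HoroLim b x g) :
    ∃ W : ℝ → M, (∀ᶠ r in atTop, dist b (W r) = r) ∧ IsAsymptoticallyShort id W ∧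
      ∀ z, Tendsto (fun r => horo b (W r) z) atTop (𝓝 (g z)) := by
  obtain ⟨φ, hφ, hmono⟩ := strictMono_subseq_of_tendsto_atTop (hx.tendsto_dist b)
  have hshort := (hx.isAsymptoticallyShort b).comp hφ.monotone hφ.tendsto_atTop
  obtain ⟨σ, W, hW⟩ := exists_isStagedPath hM b ((hx.tendsto_dist b).comp hφ.tendsto_atTop)
  exact ⟨W, (eventually_ge_atTop _).mono hW.dist_eq,
    hW.isAsymptoticallyShort hmono.monotone hshort,
    hW.tendsto_horo hmono.monotone hshort (hg.comp hφ.tendsto_atTop)⟩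

end

lemma cauchySeq_apply_of_dense {X Y : Type*} [PseudoMetricSpace X] [PseudoMetricSpace Y]
    {f : ℕ → X → Y} (hf : ∀ n, LipschitzWith 1 (f n)) {D : Set X} (hD : Dense D)
    (hc : ∀ d ∈ D, CauchySeq fun n => f n d) (x : X) : CauchySeq fun n => f n x := by
  rw [Metric.cauchySeq_iff]
  intro ε hε
  obtain ⟨d, hd, hxd⟩ := hD.exists_dist_lt x (show 0 < ε / 3 by positivity)
  obtain ⟨N, hN⟩ := Metric.cauchySeq_iff.1 (hc d hd) (ε / 3) (by positivity)
  refine ⟨N, fun m hm n hn => ?_⟩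
  have hm' := (hf m).dist_le_mul x d
  have hn' := (hf n).dist_le_mul d x
  rw [NNReal.coe_one, one_mul] at hm' hn'
  linarith [hN m hm n hn, dist_triangle4 (f m x) (f m d) (f n d) (f n x), dist_comm x d]

/-- A countable dense set reduces this to Tychonoff for a countable product of intervals. -/
theorem exists_subseq_tendsto_of_lipschitzWith {ι : Type*} [Countable ι] {X : ι → Type*}
    [∀ i, PseudoMetricSpace (X i)] [∀ i, TopologicalSpace.SeparableSpace (X i)]
    (f : ℕ → ∀ i, X i → ℝ) (hf : ∀ n i, LipschitzWith 1 (f n i))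
    (hbdd : ∀ i x, ∃ C, ∀ n, |f n i x| ≤ C) :
    ∃ φ : ℕ → ℕ, StrictMono φ ∧
      ∃ g : ∀ i, X i → ℝ, ∀ i x, Tendsto (fun n => f (φ n) i x) atTop (𝓝 (g i x)) := by
  choose D hDc hD using fun i => TopologicalSpace.exists_countable_dense (X i)
  have : ∀ i, Countable (D i) := fun i => (hDc i).to_subtype
  choose C hC using fun p : Σ i, D i => hbdd p.1 p.2
  obtain ⟨F, -, φ, hφ, hF⟩ := (isCompact_univ_pi fun p => isCompact_Icc).tendsto_subseq
    (x := fun n (p : Σ i, D i) => f n p.1 p.2)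
    fun n => Set.mem_univ_pi.2 fun p => abs_le.1 (hC p n)
  have hcauchy : ∀ i x, CauchySeq fun n => f (φ n) i x := fun i =>
    cauchySeq_apply_of_dense (fun n => hf (φ n) i) (hD i) fun d hd =>
      (tendsto_pi_nhds.1 hF ⟨i, d, hd⟩).cauchySeq
  choose g hg using fun i x => cauchySeq_tendsto_of_complete (hcauchy i x)
  exact ⟨φ, hφ, g, hg⟩

lemma exists_subseq_forall_horoLim {ι : Type*} [Countable ι] {N : ι → Type*}
    [∀ j, MetricSpace (N j)] [∀ j, TopologicalSpace.SeparableSpace (N j)] (b : ∀ j, N j)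
    (y : ℕ → ∀ j, N j) :
    ∃ φ : ℕ → ℕ, StrictMono φ ∧
      ∃ g : ∀ j, N j → ℝ, ∀ j, HoroLim (b j) (fun n => y (φ n) j) (g j) :=
  exists_subseq_tendsto_of_lipschitzWith (fun n j => horo (b j) (y n j))
    (fun _ _ => lipschitzWith_horo _ _) fun j z => ⟨dist z (b j), fun _ => abs_horo_le _ _ _⟩

/-- The coordinates converge in `EReal`; since some coordinate of every `u n` vanishes, so does
some limit. -/
lemma exists_subseq_tendsto_or_tendsto_atBot {ι : Type*} [Fintype ι] [Nonempty ι]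
    (u : ℕ → ι → ℝ) (hu : ∀ n j, u n j ≤ 0) (hmax : ∀ n, ∃ j, u n j = 0) :
    ∃ φ : ℕ → ℕ, StrictMono φ ∧ ∃ (J : Finset ι) (α : ι → ℝ), (∀ j ∈ J, 0 ≤ α j) ∧
      (∃ j ∈ J, α j = 0) ∧ (∀ j ∈ J, Tendsto (fun n => u (φ n) j) atTop (𝓝 (-α j))) ∧
      ∀ j ∉ J, Tendsto (fun n => u (φ n) j) atTop atBot := by
  classical
  obtain ⟨L, φ, hφ, hL⟩ := CompactSpace.tendsto_subseq fun n j => (u n j : EReal)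
  have hLj : ∀ j, Tendsto (fun n => (u (φ n) j : EReal)) atTop (𝓝 (L j)) :=
    tendsto_pi_nhds.1 hL
  have hL0 : ∀ j, L j ≤ 0 := fun j => le_of_tendsto' (hLj j) fun n => EReal.coe_nonpos.2 (hu _ j)
  have hsup : Finset.univ.sup' Finset.univ_nonempty L = 0 := by
    refine tendsto_nhds_unique (Tendsto.finset_sup'_nhds_apply Finset.univ_nonempty
      fun j _ => hLj j) (tendsto_const_nhds.congr
        fun n => (le_antisymm (Finset.sup'_le _ _ fun j _ => EReal.coe_nonpos.2 (hu _ j)) ?_).symm)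
    obtain ⟨j, hj⟩ := hmax (φ n)
    exact Finset.le_sup'_of_le _ (Finset.mem_univ j) (by simp [hj])
  obtain ⟨j₀, -, hj₀⟩ := Finset.exists_mem_eq_sup' Finset.univ_nonempty L
  refine ⟨φ, hφ, Finset.univ.filter fun j => L j ≠ ⊥, fun j => -(L j).toReal,
    fun j _ => neg_nonneg.2 (EReal.toReal_nonpos (hL0 j)), ⟨j₀, ?_⟩, fun j hj => ?_, fun j hj => ?_⟩
  · simp [← hj₀, hsup]
  · rw [neg_neg, ← EReal.tendsto_coe, EReal.coe_toReal ((hL0 j).trans_lt EReal.zero_lt_top).ne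
      (Finset.mem_filter.1 hj).2]
    exact hLj j
  · have hbot : L j = ⊥ := by simpa using hj
    refine tendsto_atBot.2 fun c => ?_
    filter_upwards [EReal.tendsto_nhds_bot_iff_real.1 (hbot ▸ hLj j) c] with n hn
    exact (EReal.coe_lt_coe_iff.1 hn).le

lemma tendsto_finset_sup'_of_tendsto_atBot {α ι : Type*} {l : Filter α} {s t : Finset ι}
    (hts : t ⊆ s) (ht : t.Nonempty) {f : ι → α → ℝ} {L : ι → ℝ}
    (hL : ∀ i ∈ t, Tendsto (f i) l (𝓝 (L i))) (hbot : ∀ i ∈ s, i ∉ t → Tendsto (f i) l atBot) :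
    Tendsto (fun a => s.sup' (ht.mono hts) fun i => f i a) l (𝓝 (t.sup' ht L)) := by
  obtain ⟨i₀, hi₀⟩ := ht
  have hdom : ∀ᶠ a in l, ∀ i ∈ s, i ∉ t → f i a ≤ f i₀ a := by
    refine (eventually_all_finset s).2 fun i _ => ?_
    by_cases hit : i ∈ t
    · exact Eventually.of_forall fun _ h => absurd hit h
    · filter_upwards [(hbot i ‹_› hit).eventually_le_atBot (L i₀ - 1),
        (hL i₀ hi₀).eventually (eventually_ge_nhds (sub_one_lt _))] with a h1 h2 _
      exact h1.trans h2
  refine (Tendsto.finset_sup'_nhds_apply ⟨i₀, hi₀⟩ hL).congr' (hdom.mono fun a ha => ?_)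
  refine le_antisymm (Finset.sup'_mono _ hts _) (Finset.sup'_le _ _ fun i hi => ?_)
  by_cases hit : i ∈ t
  · exact Finset.le_sup' (fun i => f i a) hit
  · exact (ha i hi hit).trans (Finset.le_sup' (fun i => f i a) hi₀)

lemma tendsto_natCast_sub_atTop (c : ℝ) : Tendsto (fun n : ℕ => (n : ℝ) - c) atTop atTop := by
  simpa only [sub_eq_add_neg] using tendsto_atTop_add_const_right _ (-c) tendsto_natCast_atTop_atTop

def staggeredSeq {ι : Type*} [DecidableEq ι] {N : ι → Type*} (b : ∀ j, N j) (J : Finset ι)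
    (α : ι → ℝ) (W : ∀ j, ℝ → N j) (n : ℕ) : ∀ j, N j :=
  fun j => if j ∈ J then W j (n - α j) else b j

section Staggered

variable {ι : Type*} [DecidableEq ι] {N : ι → Type*} {b : ∀ j, N j} {J : Finset ι} {α : ι → ℝ}
  {W : ∀ j, ℝ → N j} {j : ι}

lemma staggeredSeq_of_mem (hj : j ∈ J) (n : ℕ) : staggeredSeq b J α W n j = W j (n - α j) :=
  if_pos hj

lemma staggeredSeq_of_notMem (hj : j ∉ J) (n : ℕ) : staggeredSeq b J α W n j = b j :=
  if_neg hj

lemma eventually_dist_staggeredSeq_apply [∀ j, MetricSpace (N j)]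
    (hWb : ∀ j ∈ J, ∀ᶠ r in atTop, dist (b j) (W j r) = r) :
    ∀ᶠ n : ℕ in atTop, ∀ j ∈ J, dist (b j) (staggeredSeq b J α W n j) = n - α j :=
  (eventually_all_finset J).2 fun j hj =>
    ((tendsto_natCast_sub_atTop (α j)).eventually (hWb j hj)).mono
      fun n hn => by rw [staggeredSeq_of_mem hj, hn]

end Staggered

section Pi

variable {ι : Type*} [Fintype ι] {N : ι → Type*} [∀ j, MetricSpace (N j)]

lemma dist_pi_eq_sup' [Nonempty ι] (v w : ∀ j, N j) :
    dist v w = Finset.univ.sup' Finset.univ_nonempty fun j => dist (v j) (w j) :=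
  le_antisymm (dist_pi_le_iff'.2 fun j => Finset.le_sup' (fun j => dist (v j) (w j))
    (Finset.mem_univ j)) (Finset.sup'_le _ _ fun j _ => dist_le_pi_dist v w j)

lemma horo_pi_eq_sup' [Nonempty ι] (b w z : ∀ j, N j) :
    horo b w z = Finset.univ.sup' Finset.univ_nonempty fun j => dist (z j) (w j) - dist b w := by
  rw [horo, dist_pi_eq_sup', Finset.apply_sup'_eq_sup'_comp _ (· - dist b w)
    fun _ _ => (max_sub_sub_right _ _ _).symm]
  rfl

lemma IsAsymptoticallyShort.pi [Nonempty ι] {t : ℕ → ℝ} {x : ℕ → ∀ j, N j}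
    (hx : ∀ j, IsAsymptoticallyShort t fun n => x n j) : IsAsymptoticallyShort t x :=
  fun ε hε => (eventually_all.2 fun j => hx j ε hε).mono fun _ hk m hm =>
    dist_pi_le_iff'.2 fun j => hk j m hm

theorem IsHorofunction.exists_eq_finset_sup' [∀ j, ProperSpace (N j)]
    (hgeo : ∀ j, IsGeodesicSpace (N j)) {b : ∀ j, N j} {h : (∀ j, N j) → ℝ}
    (hh : IsHorofunction b h) :
    ∃ (J : Finset ι) (hJ : J.Nonempty) (α : ι → ℝ) (g : ∀ j, N j → ℝ), (∀ j ∈ J, 0 ≤ α j) ∧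
      (∃ j ∈ J, α j = 0) ∧ (∀ j ∈ J, IsHorofunction (b j) (g j)) ∧
      h = fun z => J.sup' hJ fun j => g j (z j) - α j := by
  obtain ⟨⟨y, hy⟩, hnot⟩ := hh
  have hdiv := tendsto_dist_atTop_of_horoLim hy hnot
  have : Nonempty ι := by
    by_contra hι
    have : IsEmpty ι := not_nonempty_iff.1 hι
    obtain ⟨n, hn⟩ := (hdiv.eventually_gt_atTop 0).exists
    exact hn.ne' (by rw [Subsingleton.elim b (y n), dist_self])
  obtain ⟨φ₁, hφ₁, J, α, hα, hα₀, hJ, hJc⟩ := exists_subseq_tendsto_or_tendsto_atBot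
    (fun n j => dist (b j) (y n j) - dist b (y n))
    (fun n j => by linarith [dist_le_pi_dist b (y n) j]) fun n => by
      obtain ⟨j, -, hj⟩ := Finset.exists_mem_eq_sup' Finset.univ_nonempty
        fun j => dist (b j) (y n j)
      exact ⟨j, by rw [dist_pi_eq_sup', hj, sub_self]⟩
  obtain ⟨φ₂, hφ₂, g, hg⟩ := exists_subseq_forall_horoLim b (y ∘ φ₁)
  have hφ := (hφ₁.comp hφ₂).tendsto_atTop
  obtain ⟨j₀, hj₀, hα₀⟩ := hα₀
  refine ⟨J, ⟨j₀, hj₀⟩, α, g, hα, ⟨j₀, hj₀, hα₀⟩,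
    fun j hj => isHorofunction_of_tendsto_dist (hgeo j) (hg j) ?_,
    funext fun z => tendsto_nhds_unique ((hy z).comp hφ) ?_⟩
  · simpa using ((hJ j hj).comp hφ₂.tendsto_atTop).add_atTop (hdiv.comp hφ)
  · refine (tendsto_finset_sup'_of_tendsto_atBot (Finset.subset_univ J) ⟨j₀, hj₀⟩
      (fun j hj => by simpa [sub_eq_add_neg] using
        (hg j (z j)).add ((hJ j hj).comp hφ₂.tendsto_atTop))
      fun j _ hj => (hg j (z j)).add_atBot ((hJc j hj).comp hφ₂.tendsto_atTop)).congr
      fun n => ?_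
    show _ = horo b (y (φ₁ (φ₂ n))) z
    rw [horo_pi_eq_sup']
    exact Finset.sup'_congr _ rfl fun j _ => by simp only [horo, Function.comp_apply]; ring

section Staggered

variable [DecidableEq ι] {b : ∀ j, N j} {J : Finset ι} {α : ι → ℝ} {W : ∀ j, ℝ → N j}

lemma eventually_dist_staggeredSeq (hWb : ∀ j ∈ J, ∀ᶠ r in atTop, dist (b j) (W j r) = r)
    (hα : ∀ j ∈ J, 0 ≤ α j) {j₀ : ι} (hj₀ : j₀ ∈ J) (hα₀ : α j₀ = 0) :
    ∀ᶠ n : ℕ in atTop, dist b (staggeredSeq b J α W n) = n :=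
  (eventually_dist_staggeredSeq_apply hWb).mono fun n hn => le_antisymm
    ((dist_pi_le_iff n.cast_nonneg).2 fun j => if hj : j ∈ J then by
      rw [hn j hj]; linarith [hα j hj] else by simp [staggeredSeq_of_notMem hj])
    (by simpa [hn j₀ hj₀, hα₀] using dist_le_pi_dist b (staggeredSeq b J α W n) j₀)

lemma isAlmostGeodesicSeq_staggeredSeq (hWb : ∀ j ∈ J, ∀ᶠ r in atTop, dist (b j) (W j r) = r)
    (hWs : ∀ j ∈ J, IsAsymptoticallyShort id (W j)) {j₀ : ι} (hj₀ : j₀ ∈ J) :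
    IsAlmostGeodesicSeq (staggeredSeq b J α W) := by
  have : Nonempty ι := ⟨j₀⟩
  set Y := staggeredSeq b J α W
  refine isAlmostGeodesicSeq_of_isAsymptoticallyShort tendsto_natCast_atTop_atTop ?_
    (IsAsymptoticallyShort.pi fun j => ?_)
  · obtain ⟨K, hK⟩ := eventually_atTop.1 (eventually_dist_staggeredSeq_apply (α := α) hWb)
    refine eventually_atTop.2 ⟨K, fun k hk m hm => ?_⟩
    linarith [dist_triangle (b j₀) (Y k j₀) (Y m j₀), hK k hk j₀ hj₀, hK m (hk.trans hm) j₀ hj₀,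
      dist_le_pi_dist (Y k) (Y m) j₀]
  · by_cases hj : j ∈ J
    · have := ((hWs j hj).comp (fun k m hkm => by simp [hkm])
        (tendsto_natCast_sub_atTop (α j))).add_const (α j)
      simpa [Y, staggeredSeq_of_mem hj, Function.comp_def] using this
    · exact fun ε hε => Eventually.of_forall fun k m hm => by
        simp only [Y, staggeredSeq_of_notMem hj, dist_self]
        linarith [(Nat.cast_le.2 hm : (k : ℝ) ≤ m)]

lemma horoLim_staggeredSeq (hJ : J.Nonempty) (hWb : ∀ j ∈ J, ∀ᶠ r in atTop, dist (b j) (W j r) = r)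
    (hα : ∀ j ∈ J, 0 ≤ α j) {j₀ : ι} (hj₀ : j₀ ∈ J) (hα₀ : α j₀ = 0) {g : ∀ j, N j → ℝ}
    (hWg : ∀ j ∈ J, ∀ z, Tendsto (fun r => horo (b j) (W j r) z) atTop (𝓝 (g j z))) :
    HoroLim b (staggeredSeq b J α W) fun z => J.sup' hJ fun j => g j (z j) - α j := by
  have : Nonempty ι := ⟨j₀⟩
  intro z
  refine (tendsto_finset_sup'_of_tendsto_atBot (Finset.subset_univ J) hJ
    (f := fun j n => dist (z j) (staggeredSeq b J α W n j) - n) (fun j hj => ?_)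
    fun j _ hj => ?_).congr' ((eventually_dist_staggeredSeq hWb hα hj₀ hα₀).mono fun n hn => ?_)
  · refine (((hWg j hj (z j)).comp (tendsto_natCast_sub_atTop (α j))).sub_const (α j)).congr'
      ((eventually_dist_staggeredSeq_apply (α := α) hWb).mono fun n hn => ?_)
    have hnj := hn j hj
    rw [staggeredSeq_of_mem hj] at hnj
    simp only [Function.comp_apply, horo, staggeredSeq_of_mem hj, hnj]
    ring
  · simpa [staggeredSeq_of_notMem hj, sub_eq_add_neg] using tendsto_atBot_add_const_left _
      (dist (z j) (b j)) (tendsto_neg_atTop_atBot.comp tendsto_natCast_atTop_atTop)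
  · show _ = horo b (staggeredSeq b J α W n) z
    rw [horo_pi_eq_sup', hn]

end Staggered

theorem exists_isAlmostGeodesicSeq_horoLim_finset_sup' (hgeo : ∀ j, IsGeodesicSpace (N j))
    (b : ∀ j, N j) {J : Finset ι} (hJ : J.Nonempty) {α : ι → ℝ} (hα : ∀ j ∈ J, 0 ≤ α j)
    {j₀ : ι} (hj₀ : j₀ ∈ J) (hα₀ : α j₀ = 0) {g : ∀ j, N j → ℝ}
    (hg : ∀ j ∈ J, ∃ x, IsAlmostGeodesicSeq x ∧ HoroLim (b j) x (g j)) :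
    ∃ Y : ℕ → ∀ j, N j, IsAlmostGeodesicSeq Y ∧
      HoroLim b Y fun z => J.sup' hJ fun j => g j (z j) - α j := by
  classical
  have : ∀ j, Nonempty (N j) := fun j => ⟨b j⟩
  choose! W hWb hWs hWg using fun j (hj : j ∈ J) =>
    (hg j hj).elim fun _ hx => hx.1.exists_path (hgeo j) (b j) hx.2
  exact ⟨staggeredSeq b J α W, isAlmostGeodesicSeq_staggeredSeq hWb hWs hj₀,
    horoLim_staggeredSeq hJ hWb hα hj₀ hα₀ hWg⟩

end Pi

theorem stmt_12_general (q : ℕ) (N : Fin q → Type*) [∀ j, MetricSpace (N j)] [∀ j, ProperSpace (N j)]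
    (hgeo : ∀ j, IsGeodesicSpace (N j)) (b : ∀ j, N j)
    (hbus : ∀ j, ∀ h : N j → ℝ, IsHorofunction (b j) h → IsBusemannPoint (b j) h)
    (h : (∀ j, N j) → ℝ) (hh : IsHorofunction b h) :
    IsBusemannPoint b h := by
  obtain ⟨J, hJ, α, g, hα, ⟨j₀, hj₀, hα₀⟩, hg, hh_eq⟩ := hh.exists_eq_finset_sup' hgeo
  obtain ⟨Y, hY, hYh⟩ := exists_isAlmostGeodesicSeq_horoLim_finset_sup' hgeo b hJ hα hj₀ hα₀
    fun j hj => (hbus j (g j) (hg j hj)).2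
  exact ⟨hh, Y, hY, hh_eq ▸ hYh⟩

/-- if in each factor all horofunctions are Busemann points and distinct
Busemann points lie at infinite detour distance, then all horofunctions of the product
are Busemann points. -/
theorem stmt_12 (q : ℕ) (N : Fin q → Type*) [∀ j, MetricSpace (N j)] [∀ j, ProperSpace (N j)]
    (hgeo : ∀ j, IsGeodesicSpace (N j)) (b : ∀ j, N j)
    (hbus : ∀ j, ∀ h : N j → ℝ, IsHorofunction (b j) h → IsBusemannPoint (b j) h)
    (hdet : ∀ j, ∀ h h' : N j → ℝ, IsBusemannPoint (b j) h → IsBusemannPoint (b j) h' →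
      h ≠ h' → detourDist (b j) h h' = ⊤)
    (h : (∀ j, N j) → ℝ) (hh : IsHorofunction b h) :
    IsBusemannPoint b h :=
  stmt_12_general q N hgeo b hbus h hh
end
end

section
/- For j = 1,…,q let (N_j,ρ_j) be a proper geodesic metric space with basepoint b_j such that every horofunction of (N_j,ρ_j) is a Busemann point and δ(h_j,h_j') = ∞ for every pair of distinct Busemann points h_j ≠ h_j' of (N_j,ρ_j). Let h(x) = max_{j∈J} (h_j(x_j) − α_j) and h'(x) = max_{j∈J'} (h'_j(x_j) − β_j) be Busemann points of the product (∏_{j=1}^q N_j, d_∞) with the same basepoint, where J, J' ⊆ {1,…,q} are non-empty, h_j (j ∈ J) and h'_j (j ∈ J') are Busemann points of the factors, and min_{j∈J} α_j = 0 = min_{j∈J'} β_j. If J ≠ J', or if J = J' and h_k ≠ h'_k for some k ∈ J, then δ(h,h') = ∞. -/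
open Filter Topology

noncomputable section

/-!
Suppose both detour costs between `h = max_J (h_j - α_j)` and `h' = max_{J'} (h'_j - β_j)` are
finite, and take `zⁿ → h` with `d(b,zⁿ) + h'(zⁿ)` bounded. For `k ∈ J'` this bounds
`d(b_k,zⁿ_k) + h'_k(zⁿ_k)` and `d(b_k,zⁿ_k) - d(b,zⁿ)`, so after passing to a subsequence
`zⁿ_k → g` in the horofunction sense, `d(b_k,zⁿ_k) - d(b,zⁿ) → r`, and `g(x_k) + r ≤ h(x)` for
all `x`. Since the `h_j` are unbounded below, `x` can be chosen with `h(x)` as small as we like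
outside the `k`-th coordinate. If `k ∉ J` this contradicts `g(b_k) = 0`; if `k ∈ J` it gives
`g ≤ h_k + const`, while `h'_k ≤ g + const`, so `H(h_k,h'_k)` is finite along an almost geodesic
converging to `h_k`. Hence `J' ⊆ J`, symmetrically `J ⊆ J'`, and for `J = J'` every `δ(h_k,h'_k)`
is finite.
-/

section Horofunction

variable {M : Type*} [MetricSpace M]

lemma neg_dist_le_horo (b y z : M) : -dist b z ≤ horo b y z := by
  unfold horo
  linarith [dist_triangle b z y]

lemma horo_le_dist (b y z : M) : horo b y z ≤ dist b z := by
  unfold horo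
  linarith [dist_triangle z b y, dist_comm z b]

namespace HoroLim

variable {b : M} {y : ℕ → M} {h : M → ℝ}

lemma neg_dist_le (hl : HoroLim b y h) (z : M) : -dist b z ≤ h z :=
  ge_of_tendsto' (hl z) fun n => neg_dist_le_horo b (y n) z

lemma le_add_dist (hl : HoroLim b y h) (x x' : M) : h x ≤ h x' + dist x x' :=
  le_of_tendsto_of_tendsto' (hl x) ((hl x').add tendsto_const_nhds) fun n =>
    (lipschitzWith_horo b (y n)).le_add_mul x x' |>.trans_eq (by simp)

lemma apply_self (hl : HoroLim b y h) : h b = 0 :=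
  tendsto_nhds_unique (hl b) (by simp [horo])

lemma comp_strictMono (hl : HoroLim b y h) {φ : ℕ → ℕ} (hφ : StrictMono φ) :
    HoroLim b (y ∘ φ) h :=
  fun z => (hl z).comp hφ.tendsto_atTop

end HoroLim

lemma exists_horoLim_comp_strictMono [ProperSpace M] (b : M) (y : ℕ → M) :
    ∃ φ : ℕ → ℕ, StrictMono φ ∧ ∃ g : M → ℝ, HoroLim b (y ∘ φ) g := by
  set K : Set (M → ℝ) :=
    {f | LipschitzWith 1 f} ∩ Set.univ.pi fun x => Set.Icc (-dist b x) (dist b x)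
  have : CompactSpace K := isCompact_iff_compactSpace.mp <|
    (isCompact_univ_pi fun _ => isCompact_Icc).inter_left (isClosed_setOfPred_lipschitzWith 1)
  -- `K` is metrizable, being embedded in `ℕ → ℝ` by restriction to a dense sequence.
  have : Nonempty M := ⟨b⟩
  obtain ⟨e, he⟩ := TopologicalSpace.exists_dense_seq M
  have hres : Continuous fun f : K => fun i => (f : M → ℝ) (e i) :=
    continuous_pi fun i => (continuous_apply (e i)).comp continuous_subtype_val
  have hinj : Function.Injective fun f : K => fun i => (f : M → ℝ) (e i) := fun f f' hff' =>
    Subtype.ext <| he.equalizer f.2.1.continuous f'.2.1.continuous (funext (congrFun hff'))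
  have : TopologicalSpace.MetrizableSpace K :=
    (hres.isClosedEmbedding hinj).isEmbedding.metrizableSpace
  have hmem (n : ℕ) : horo b (y n) ∈ K :=
    ⟨lipschitzWith_horo b (y n), fun z _ => ⟨neg_dist_le_horo b (y n) z, horo_le_dist b (y n) z⟩⟩
  obtain ⟨g, -, φ, hφ, hlim⟩ :=
    isCompact_univ.isSeqCompact (x := fun n => (⟨horo b (y n), hmem n⟩ : K)) fun _ => trivial
  exact ⟨φ, hφ, g, tendsto_pi_nhds.mp ((continuous_subtype_val.tendsto g).comp hlim)⟩

lemma IsAlmostGeodesicSeq.eventually_le {b : M} {y : ℕ → M} {h : M → ℝ}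
    (hag : IsAlmostGeodesicSeq y) (hl : HoroLim b y h) :
    ∀ᶠ n in atTop, h (y n) ≤ 1 + dist b (y 0) - dist (y n) (y 0) := by
  obtain ⟨N, hN⟩ := hag.2 1 one_pos
  filter_upwards [eventually_ge_atTop N] with n hn
  refine le_of_tendsto (hl (y n)) ?_
  filter_upwards [eventually_ge_atTop n] with m hm
  unfold horo
  linarith [hN m n hn hm, dist_triangle (y m) b (y 0), dist_comm (y m) b, dist_comm (y n) (y m)]

lemma IsBusemannPoint.exists_le {b : M} {h : M → ℝ} (hb : IsBusemannPoint b h) (T : ℝ) :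
    ∃ x, h x ≤ T := by
  obtain ⟨-, y, hag, hl⟩ := hb
  obtain ⟨n, hle, hfar⟩ :=
    (hag.eventually_le hl |>.and (hag.1.eventually_ge_atTop (1 + dist b (y 0) - T))).exists
  exact ⟨y n, by linarith⟩

end Horofunction

section DetourCost

variable {M : Type*} [MetricSpace M] {b : M} {h₁ h₂ : M → ℝ}

lemma detourCost_ne_bot (c : ℝ) (hc : ∀ z, -dist b z - c ≤ h₂ z) : detourCost b h₁ h₂ ≠ ⊥ := by
  refine ne_bot_of_le_ne_bot (EReal.coe_ne_bot (-c)) (le_iInf fun z => ?_)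
  refine le_liminf_of_le (by isBoundedDefault) (Eventually.of_forall fun n => ?_)
  exact EReal.coe_le_coe_iff.mpr (by linarith [hc (z.1 n)])

lemma detourCost_le_of_eventually_le (z : ℕ → M) (hz : HoroLim b z h₁) (C : ℝ)
    (hC : ∀ᶠ n in atTop, dist b (z n) + h₂ (z n) ≤ C) : detourCost b h₁ h₂ ≤ C :=
  iInf_le_of_le ⟨z, hz⟩ <| liminf_le_of_frequently_le
    (hC.mono fun _ hn => EReal.coe_le_coe_iff.mpr hn).frequently (by isBoundedDefault)

lemma exists_horoLim_of_detourCost_ne_top (hfin : detourCost b h₁ h₂ ≠ ⊤) :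
    ∃ z : ℕ → M, HoroLim b z h₁ ∧ ∃ C : ℝ, ∀ n, dist b (z n) + h₂ (z n) ≤ C := by
  obtain ⟨⟨z, hz⟩, hzlt⟩ := iInf_lt_iff.mp (lt_top_iff_ne_top.mpr hfin)
  obtain ⟨C, hC, -⟩ := EReal.lt_iff_exists_real_btwn.mp hzlt
  have hfreq : ∃ᶠ n in atTop, dist b (z n) + h₂ (z n) ≤ C :=
    (frequently_lt_of_liminf_lt (by isBoundedDefault) hC).mono fun _ hn =>
      (EReal.coe_lt_coe_iff.mp hn).le
  obtain ⟨φ, hφ, hall⟩ := extraction_of_frequently_atTop hfreq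
  exact ⟨z ∘ φ, hz.comp_strictMono hφ, C, hall⟩

lemma detourCost_ne_top_of_le_add (hb : IsBusemannPoint b h₁) (c : ℝ)
    (hle : ∀ x, h₂ x ≤ h₁ x + c) : detourCost b h₁ h₂ ≠ ⊤ := by
  obtain ⟨-, u, hag, hu⟩ := hb
  refine ne_top_of_le_ne_top (EReal.coe_ne_top (1 + 2 * dist b (u 0) + c))
    (detourCost_le_of_eventually_le u hu _ ?_)
  filter_upwards [hag.eventually_le hu] with n hn
  linarith [hle (u n), dist_triangle b (u 0) (u n), dist_comm (u 0) (u n)]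

lemma HoroLim.le_add_of_forall_le {w : ℕ → M} {g f : M → ℝ} (hw : HoroLim b w g) {C : ℝ}
    (hC : ∀ n, dist b (w n) + f (w n) ≤ C) (hf : ∀ x x', f x ≤ f x' + dist x x') (x : M) :
    f x ≤ g x + C :=
  le_of_tendsto_of_tendsto' tendsto_const_nhds ((hw x).add_const C) fun n => by
    unfold horo
    linarith [hC n, hf x (w n)]

end DetourCost

section Product

variable {ι : Type*} {N : ι → Type*}

def productHoro (J : Finset ι) (hJ : J.Nonempty) (f : ∀ j, N j → ℝ) (α : ι → ℝ)
    (x : ∀ j, N j) : ℝ :=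
  J.sup' hJ fun j => f j (x j) - α j

variable {J : Finset ι} {hJ : J.Nonempty} {f : ∀ j, N j → ℝ} {α : ι → ℝ}

lemma le_productHoro {j : ι} (hj : j ∈ J) (x : ∀ j, N j) :
    f j (x j) - α j ≤ productHoro J hJ f α x :=
  Finset.le_sup' (fun j => f j (x j) - α j) hj

lemma exists_update_productHoro_le [∀ j, Nonempty (N j)] (hf : ∀ j ∈ J, ∀ T, ∃ y, f j y ≤ T)
    (k : ι) (y : N k) {T : ℝ} (hT : k ∈ J → f k y - α k ≤ T) :
    ∃ x : ∀ j, N j, x k = y ∧ productHoro J hJ f α x ≤ T := by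
  classical
  have hpt (j : ι) : ∃ y : N j, j ∈ J → f j y - α j ≤ T := by
    by_cases hj : j ∈ J
    · obtain ⟨y, hy⟩ := hf j hj (T + α j)
      exact ⟨y, fun _ => by linarith⟩
    · exact ⟨Classical.arbitrary _, (absurd · hj)⟩
  choose x hx using hpt
  refine ⟨Function.update x k y, Function.update_self .., Finset.sup'_le hJ _ fun j hj => ?_⟩
  rcases eq_or_ne j k with rfl | hjk
  · simpa using hT hj
  · simpa [Function.update_of_ne hjk] using hx j hj

variable [Fintype ι] [∀ j, MetricSpace (N j)] {b : ∀ j, N j}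

lemma HoroLim.exists_factor {z : ℕ → ∀ j, N j} {h : (∀ j, N j) → ℝ} (hz : HoroLim b z h)
    (k : ι) [ProperSpace (N k)] {R : ℝ} (hR : ∀ n, -R ≤ dist (b k) (z n k) - dist b (z n)) :
    ∃ φ : ℕ → ℕ, StrictMono φ ∧ ∃ (g : N k → ℝ) (r : ℝ),
      HoroLim (b k) (fun n => z (φ n) k) g ∧ ∀ x, g (x k) + r ≤ h x := by
  have hmem (n : ℕ) : dist (b k) (z n k) - dist b (z n) ∈ Set.Icc (-R) 0 :=
    ⟨hR n, by linarith [dist_le_pi_dist b (z n) k]⟩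
  obtain ⟨r, -, φ₁, hφ₁, hr⟩ := isCompact_Icc.tendsto_subseq hmem
  obtain ⟨φ₂, hφ₂, g, hg⟩ := exists_horoLim_comp_strictMono (b k) fun n => z (φ₁ n) k
  refine ⟨φ₁ ∘ φ₂, hφ₁.comp hφ₂, g, r, hg, fun x => ?_⟩
  refine le_of_tendsto_of_tendsto' ((hg (x k)).add (hr.comp hφ₂.tendsto_atTop))
    (hz.comp_strictMono (hφ₁.comp hφ₂) x) fun n => ?_
  simp only [Function.comp_apply, horo]
  linarith [dist_le_pi_dist x (z (φ₁ (φ₂ n))) k]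

lemma exists_factor_horoLim_of_detourCost_ne_top {h₁ h₂ : (∀ j, N j) → ℝ} (k : ι)
    [ProperSpace (N k)] {v : N k → ℝ} (hv : ∀ y, -dist (b k) y ≤ v y) {c : ℝ}
    (hh₂ : ∀ x, v (x k) - c ≤ h₂ x) (hfin : detourCost b h₁ h₂ ≠ ⊤) :
    ∃ (w : ℕ → N k) (g : N k → ℝ) (r C : ℝ), HoroLim (b k) w g ∧
      (∀ n, dist (b k) (w n) + v (w n) ≤ C) ∧ ∀ x, g (x k) + r ≤ h₁ x := by
  obtain ⟨z, hz, C, hC⟩ := exists_horoLim_of_detourCost_ne_top hfin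
  have hR (n : ℕ) : -(C + c) ≤ dist (b k) (z n k) - dist b (z n) := by
    linarith [hC n, hh₂ (z n), hv (z n k)]
  obtain ⟨φ, -, g, r, hg, hgr⟩ := hz.exists_factor k hR
  refine ⟨fun n => z (φ n) k, g, r, C + c, hg, fun n => ?_, hgr⟩
  linarith [hC (φ n), hh₂ (z (φ n)), dist_le_pi_dist b (z (φ n)) k]

lemma exists_neg_dist_sub_le_productHoro (hf : ∀ j ∈ J, ∃ y, HoroLim (b j) y (f j)) :
    ∃ c : ℝ, ∀ x, -dist b x - c ≤ productHoro J hJ f α x := by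
  obtain ⟨j, hj⟩ := id hJ
  obtain ⟨y, hy⟩ := hf j hj
  refine ⟨α j, fun x => ?_⟩
  linarith [le_productHoro (hJ := hJ) (f := f) (α := α) hj x, hy.neg_dist_le (x j),
    dist_le_pi_dist b x j]

lemma mem_and_detourCost_ne_top_of_detourCost_productHoro_ne_top
    {J' : Finset ι} {hJ' : J'.Nonempty} {f' : ∀ j, N j → ℝ} {β : ι → ℝ}
    (hf : ∀ j ∈ J, IsBusemannPoint (b j) (f j)) {k : ι} [ProperSpace (N k)] (hk : k ∈ J')
    (hf' : ∃ y, HoroLim (b k) y (f' k))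
    (hfin : detourCost b (productHoro J hJ f α) (productHoro J' hJ' f' β) ≠ ⊤) :
    k ∈ J ∧ detourCost (b k) (f k) (f' k) ≠ ⊤ := by
  obtain ⟨y', hy'⟩ := hf'
  obtain ⟨w, g, r, C, hwg, hwC, hgr⟩ := exists_factor_horoLim_of_detourCost_ne_top k
    hy'.neg_dist_le (fun x => le_productHoro hk x) hfin
  have : ∀ j, Nonempty (N j) := fun j => ⟨b j⟩
  have hg (y : N k) (T : ℝ) (hT : k ∈ J → f k y - α k ≤ T) : g y + r ≤ T := by
    obtain ⟨x, rfl, hx⟩ := exists_update_productHoro_le (hJ := hJ)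
      (fun j hj => (hf j hj).exists_le) k y hT
    exact (hgr x).trans hx
  have hkJ : k ∈ J := by
    by_contra hkJ
    linarith [hg (b k) (r - 1) (absurd · hkJ), hwg.apply_self]
  refine ⟨hkJ, detourCost_ne_top_of_le_add (hf k hkJ) (C - α k - r) fun y => ?_⟩
  linarith [hwg.le_add_of_forall_le hwC hy'.le_add_dist y, hg y (f k y - α k) fun _ => le_rfl]

end Product

theorem stmt_14_general (q : ℕ) (N : Fin q → Type*) [∀ j, MetricSpace (N j)] [∀ j, ProperSpace (N j)]
    (b : ∀ j, N j)
    (hdet : ∀ j, ∀ h h' : N j → ℝ, IsBusemannPoint (b j) h → IsBusemannPoint (b j) h' →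
      h ≠ h' → detourDist (b j) h h' = ⊤)
    (J J' : Finset (Fin q)) (hJ : J.Nonempty) (hJ' : J'.Nonempty)
    (hs hs' : ∀ j, N j → ℝ)
    (hsb : ∀ j ∈ J, IsBusemannPoint (b j) (hs j))
    (hsb' : ∀ j ∈ J', IsBusemannPoint (b j) (hs' j))
    (α β : Fin q → ℝ)
    (hne : J ≠ J' ∨ (J = J' ∧ ∃ k ∈ J, hs k ≠ hs' k)) :
    detourDist b (fun x => J.sup' hJ fun j => hs j (x j) - α j)
      (fun x => J'.sup' hJ' fun j => hs' j (x j) - β j) = ⊤ := by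
  change detourDist b (productHoro J hJ hs α) (productHoro J' hJ' hs' β) = ⊤
  obtain ⟨c, hc⟩ := exists_neg_dist_sub_le_productHoro (hJ := hJ) (α := α) fun j hj =>
    (hsb j hj).1.1
  obtain ⟨c', hc'⟩ := exists_neg_dist_sub_le_productHoro (hJ := hJ') (α := β) fun j hj =>
    (hsb' j hj).1.1
  by_contra hδ
  obtain ⟨hfin, hfin'⟩ :=
    (EReal.add_ne_top_iff_ne_top₂ (detourCost_ne_bot c' hc') (detourCost_ne_bot c hc)).mp hδ
  have hJ'k (k : Fin q) (hk : k ∈ J') :=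
    mem_and_detourCost_ne_top_of_detourCost_productHoro_ne_top hsb hk (hsb' k hk).1.1 hfin
  have hJk (k : Fin q) (hk : k ∈ J) :=
    mem_and_detourCost_ne_top_of_detourCost_productHoro_ne_top hsb' hk (hsb k hk).1.1 hfin'
  rcases hne with hJJ' | ⟨rfl, k, hk, hkne⟩
  · exact hJJ' (Finset.Subset.antisymm (fun k hk => (hJk k hk).1) fun k hk => (hJ'k k hk).1)
  · exact EReal.add_ne_top (hJ'k k hk).2 (hJk k hk).2
      (hdet k _ _ (hsb k hk) (hsb' k hk) hkne)

/-- product Busemann points built from different index sets, or from distinct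
factor Busemann points, lie at infinite detour distance. -/
theorem stmt_14 (q : ℕ) (N : Fin q → Type*) [∀ j, MetricSpace (N j)] [∀ j, ProperSpace (N j)]
    (hgeo : ∀ j, IsGeodesicSpace (N j)) (b : ∀ j, N j)
    (hbus : ∀ j, ∀ h : N j → ℝ, IsHorofunction (b j) h → IsBusemannPoint (b j) h)
    (hdet : ∀ j, ∀ h h' : N j → ℝ, IsBusemannPoint (b j) h → IsBusemannPoint (b j) h' →
      h ≠ h' → detourDist (b j) h h' = ⊤)
    (J J' : Finset (Fin q)) (hJ : J.Nonempty) (hJ' : J'.Nonempty)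
    (hs hs' : ∀ j, N j → ℝ)
    (hsb : ∀ j ∈ J, IsBusemannPoint (b j) (hs j))
    (hsb' : ∀ j ∈ J', IsBusemannPoint (b j) (hs' j))
    (α β : Fin q → ℝ)
    (hα : ∀ j ∈ J, 0 ≤ α j) (hα0 : ∃ j ∈ J, α j = 0)
    (hβ : ∀ j ∈ J', 0 ≤ β j) (hβ0 : ∃ j ∈ J', β j = 0)
    (hBus : IsBusemannPoint b (fun x => J.sup' hJ fun j => hs j (x j) - α j))
    (hBus' : IsBusemannPoint b (fun x => J'.sup' hJ' fun j => hs' j (x j) - β j))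
    (hne : J ≠ J' ∨ (J = J' ∧ ∃ k ∈ J, hs k ≠ hs' k)) :
    detourDist b (fun x => J.sup' hJ fun j => hs j (x j) - α j)
      (fun x => J'.sup' hJ' fun j => hs' j (x j) - β j) = ⊤ :=
  stmt_14_general q N b hdet J J' hJ hJ' hs hs' hsb hsb' α β hne
end
end

section
/- Let p > n ≥ 1. There is no map φ : ℝ^p → ℝ^n such that max_{1≤j≤n}(φ(x)_j − φ(y)_j) + max_{1≤j≤n}(φ(y)_j − φ(x)_j) = max_{1≤i≤p}(x_i − y_i) + max_{1≤i≤p}(y_i − x_i) for all x, y ∈ ℝ^p. Equivalently, there is no isometric embedding of the quotient normed space (ℝ^p/Sp(𝟏), ‖·‖_var) into (ℝ^n/Sp(𝟏), ‖·‖_var). -/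
/-!
Pad `ℝ^n` into `ℝ^p` with zeros; since `p > n`, some coordinate of a padded vector vanishes, so
on the padded vectors `d_var` dominates the sup distance. On the target side, the chart
`x ↦ (x_i - x_0)_{i ≠ 0}` of `ℝ^n / Sp(𝟏)` onto `ℝ^{n-1}` is bounded below by `d_var / 2`.
An isometry `φ` would thus yield an antilipschitz map `ℝ^n → ℝ^{n-1}`, which cannot exist
because antilipschitz maps do not decrease Hausdorff dimension.
-/

open Finset

theorem AntilipschitzWith.card_le {ι κ : Type*} [Fintype ι] [Fintype κ] {K : NNReal}
    {f : (ι → ℝ) → (κ → ℝ)} (hf : AntilipschitzWith K f) :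
    Fintype.card ι ≤ Fintype.card κ := by
  have h := hf.dimH_preimage_le Set.univ
  rwa [Set.preimage_univ, Real.dimH_univ_pi, Real.dimH_univ_pi, Nat.cast_le] at h

section VarDist

variable {ι : Type*} [Fintype ι] [Nonempty ι]

noncomputable def varDist (x y : ι → ℝ) : ℝ :=
  univ.sup' univ_nonempty (fun i => x i - y i) + univ.sup' univ_nonempty (fun i => y i - x i)

theorem dist_le_varDist_of_eq {x y : ι → ℝ} {i₀ : ι} (h : x i₀ = y i₀) :
    dist x y ≤ varDist x y := by
  have hle₁ (i) : x i - y i ≤ univ.sup' univ_nonempty (fun i => x i - y i) :=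
    le_sup' (fun i => x i - y i) (mem_univ i)
  have hle₂ (i) : y i - x i ≤ univ.sup' univ_nonempty (fun i => y i - x i) :=
    le_sup' (fun i => y i - x i) (mem_univ i)
  have h₁ := hle₁ i₀
  have h₂ := hle₂ i₀
  rw [h, sub_self] at h₁ h₂
  refine (dist_pi_le_iff (by unfold varDist; linarith)).2 fun i => ?_
  rw [Real.dist_eq, abs_le]
  constructor <;> unfold varDist <;> linarith [hle₁ i, hle₂ i]

variable [DecidableEq ι]

def normalizeAt (i₀ : ι) (x : ι → ℝ) : {i // i ≠ i₀} → ℝ := fun i => x i - x i₀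

theorem varDist_le_two_mul_dist_normalizeAt (i₀ : ι) (x y : ι → ℝ) :
    varDist x y ≤ 2 * dist (normalizeAt i₀ x) (normalizeAt i₀ y) := by
  set D := dist (normalizeAt i₀ x) (normalizeAt i₀ y)
  have hD : ∀ i, |(x i - x i₀) - (y i - y i₀)| ≤ D := by
    intro i
    by_cases hi : i = i₀
    · subst hi; simp [D]
    · exact (Real.dist_eq _ _).symm.le.trans
        (dist_le_pi_dist (normalizeAt i₀ x) (normalizeAt i₀ y) ⟨i, hi⟩)
  have h₁ : univ.sup' univ_nonempty (fun i => x i - y i) ≤ D + (x i₀ - y i₀) :=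
    sup'_le _ _ fun i _ => by linarith [le_abs_self ((x i - x i₀) - (y i - y i₀)), hD i]
  have h₂ : univ.sup' univ_nonempty (fun i => y i - x i) ≤ D - (x i₀ - y i₀) :=
    sup'_le _ _ fun i _ => by linarith [neg_abs_le ((x i - x i₀) - (y i - y i₀)), hD i]
  unfold varDist
  linarith

end VarDist

theorem dist_le_varDist_extend {ι κ : Type*} [Fintype ι] [Fintype κ] [Nonempty κ]
    {e : ι → κ} (he : Function.Injective e) {k : κ} (hk : ∀ i, e i ≠ k) (z z' : ι → ℝ) :
    dist z z' ≤ varDist (Function.extend e z 0) (Function.extend e z' 0) := by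
  have hk' : ¬∃ i, e i = k := fun ⟨i, hi⟩ => hk i hi
  refine le_trans ?_ (dist_le_varDist_of_eq (i₀ := k) ?_)
  · refine (dist_pi_le_iff dist_nonneg).2 fun i => ?_
    rw [← he.extend_apply z 0, ← he.extend_apply z' 0]
    exact dist_le_pi_dist _ _ (e i)
  · rw [Function.extend_apply' _ _ _ hk', Function.extend_apply' _ _ _ hk']

/-- for p > n ≥ 1 there is no isometric embedding of
(ℝ^p/Sp(1), ‖·‖_var) into (ℝ^n/Sp(1), ‖·‖_var), phrased via the variation
pseudometric d_var(x,y) = max_j (x_j − y_j) + max_j (y_j − x_j). -/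
theorem stmt_17 (p n : ℕ) (hn : 1 ≤ n) (hpn : n < p) :
    ¬ ∃ φ : (Fin p → ℝ) → (Fin n → ℝ),
      ∀ x y : Fin p → ℝ,
        (Finset.univ.sup' (Finset.univ_nonempty_iff.mpr (Fin.pos_iff_nonempty.mp hn))
            fun j => φ x j - φ y j) +
        (Finset.univ.sup' (Finset.univ_nonempty_iff.mpr (Fin.pos_iff_nonempty.mp hn))
            fun j => φ y j - φ x j) =
        (Finset.univ.sup'
            (Finset.univ_nonempty_iff.mpr
              (Fin.pos_iff_nonempty.mp (lt_of_le_of_lt (Nat.zero_le n) hpn)))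
            fun i => x i - y i) +
        (Finset.univ.sup'
            (Finset.univ_nonempty_iff.mpr
              (Fin.pos_iff_nonempty.mp (lt_of_le_of_lt (Nat.zero_le n) hpn)))
            fun i => y i - x i) := by
  rintro ⟨φ, hφ⟩
  have : NeZero n := ⟨by omega⟩
  have : NeZero p := ⟨by omega⟩
  let pad : (Fin n → ℝ) → (Fin p → ℝ) := fun z => Function.extend (Fin.castLE hpn.le) z 0
  have hg : AntilipschitzWith 2 (normalizeAt 0 ∘ φ ∘ pad) := by
    refine AntilipschitzWith.of_le_mul_dist fun z z' => ?_
    calc dist z z' ≤ varDist (pad z) (pad z') :=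
          dist_le_varDist_extend (Fin.castLE_injective hpn.le) (k := ⟨n, hpn⟩)
            (fun i h => i.isLt.ne (congrArg Fin.val h)) z z'
      _ = varDist (φ (pad z)) (φ (pad z')) := (hφ _ _).symm
      _ ≤ 2 * dist (normalizeAt 0 (φ (pad z))) (normalizeAt 0 (φ (pad z'))) :=
          varDist_le_two_mul_dist_normalizeAt 0 _ _
  have hcard := hg.card_le
  simp only [Fintype.card_fin, Fintype.card_subtype_compl, Fintype.card_unique] at hcard
  omega
end

section
/- Let n ≥ 1 and let B = {z ∈ ℂ^n : ‖z‖ < 1} be the open Euclidean unit ball, where ‖·‖ and ⟨z,w⟩ = Σ_i z_i conj(w_i) denote the Euclidean norm and the Hermitian inner product on ℂ^n. For z, w ∈ B define k(z,w) = log [ (|1 − ⟨z,w⟩| + (|1 − ⟨z,w⟩|² − (1 − ‖z‖²)(1 − ‖w‖²))^{1/2})² / ((1 − ‖z‖²)(1 − ‖w‖²)) ] (this is the Kobayashi distance of the ball; in particular k(0,w) = log((1+‖w‖)²/(1−‖w‖²))). If (w^n) is a sequence in B converging in norm to a point ξ with ‖ξ‖ = 1, then for every z ∈ B one has k(z, w^n)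 − k(0, w^n) → log( |1 − ⟨z,ξ⟩|² / (1 − ‖z‖²) ) as n → ∞. -/
/-!
On the ball, `k(z, w) - k(0, w)` is the logarithm of a quotient in which the factor
`1 - ‖w‖²` of both denominators has cancelled; that quotient is continuous in `w` on all of
`ℂⁿ`, and at a point `ξ` of the sphere the square root collapses to `|1 - ⟨z, ξ⟩|`, so it
equals `(2 |1 - ⟨z, ξ⟩|)² / (4 (1 - ‖z‖²))`.
-/

open scoped ComplexInnerProductSpace

noncomputable section

/-- The Kobayashi distance of the Euclidean unit ball in ℂⁿ, via the explicit formula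
(here `⟪w, z⟫ = Σᵢ zᵢ conj(wᵢ)` is the paper's Hermitian inner product `⟨z,w⟩`). -/
def kball {n : ℕ} (z w : EuclideanSpace ℂ (Fin n)) : ℝ :=
  Real.log
    (((‖1 - ⟪w, z⟫‖ +
        Real.sqrt ((‖1 - ⟪w, z⟫‖) ^ 2 - (1 - ‖z‖ ^ 2) * (1 - ‖w‖ ^ 2))) ^ 2) /
      ((1 - ‖z‖ ^ 2) * (1 - ‖w‖ ^ 2)))

open Filter Topology

lemma norm_one_sub_inner_pos {E : Type*} [NormedAddCommGroup E] [InnerProductSpace ℂ E]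
    {u z : E} (hu : ‖u‖ ≤ 1) (hz : ‖z‖ < 1) : 0 < ‖1 - ⟪u, z⟫‖ :=
  calc 0 < 1 - ‖u‖ * ‖z‖ := by nlinarith [norm_nonneg u, norm_nonneg z]
    _ ≤ ‖(1 : ℂ)‖ - ‖⟪u, z⟫‖ := by rw [norm_one]; gcongr; exact norm_inner_le_norm u z
    _ ≤ ‖1 - ⟪u, z⟫‖ := norm_sub_norm_le _ _

lemma one_sub_sq_pos_of_norm_lt_one {E : Type*} [SeminormedAddCommGroup E] {z : E}
    (hz : ‖z‖ < 1) : 0 < 1 - ‖z‖ ^ 2 :=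
  sub_pos.2 (pow_lt_one₀ (norm_nonneg z) hz two_ne_zero)

section

variable {n : ℕ}

lemma kball_zero_left (w : EuclideanSpace ℂ (Fin n)) :
    kball 0 w = Real.log ((1 + ‖w‖) ^ 2 / (1 - ‖w‖ ^ 2)) := by
  simp [kball, Real.sqrt_sq (norm_nonneg w)]

def kballQuot (z w : EuclideanSpace ℂ (Fin n)) : ℝ :=
  (‖1 - ⟪w, z⟫‖ + Real.sqrt (‖1 - ⟪w, z⟫‖ ^ 2 - (1 - ‖z‖ ^ 2) * (1 - ‖w‖ ^ 2))) ^ 2 /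
    ((1 - ‖z‖ ^ 2) * (1 + ‖w‖) ^ 2)

lemma kball_sub_kball_zero {z w : EuclideanSpace ℂ (Fin n)} (hz : ‖z‖ < 1) (hw : ‖w‖ < 1) :
    kball z w - kball 0 w = Real.log (kballQuot z w) := by
  have hA := norm_one_sub_inner_pos hw.le hz
  have hB := one_sub_sq_pos_of_norm_lt_one hz
  have hC := one_sub_sq_pos_of_norm_lt_one hw
  rw [kball_zero_left, kball, ← Real.log_div (by positivity) (by positivity), kballQuot]
  congr 1
  field_simp

lemma continuous_kballQuot {z : EuclideanSpace ℂ (Fin n)} (hz : ‖z‖ < 1) :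
    Continuous (kballQuot z) := by
  have hB := one_sub_sq_pos_of_norm_lt_one hz
  refine Continuous.div (by fun_prop) (by fun_prop) fun w => ?_
  positivity

lemma kballQuot_of_norm_eq_one (z : EuclideanSpace ℂ (Fin n)) {ξ : EuclideanSpace ℂ (Fin n)}
    (hξ : ‖ξ‖ = 1) : kballQuot z ξ = ‖1 - ⟪ξ, z⟫‖ ^ 2 / (1 - ‖z‖ ^ 2) := by
  rw [kballQuot, hξ]
  simp only [one_pow, sub_self, mul_zero, sub_zero, Real.sqrt_sq (norm_nonneg _)]
  rw [← two_mul, one_add_one_eq_two, mul_pow, mul_comm, mul_div_mul_right _ _ (by norm_num)]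

end

theorem stmt_18_general (n : ℕ)
    (w : ℕ → EuclideanSpace ℂ (Fin n)) (hw : ∀ k, ‖w k‖ < 1)
    (ξ : EuclideanSpace ℂ (Fin n)) (hξ : ‖ξ‖ = 1)
    (hwξ : Filter.Tendsto w Filter.atTop (nhds ξ)) :
    ∀ z : EuclideanSpace ℂ (Fin n), ‖z‖ < 1 →
      Filter.Tendsto (fun k => kball z (w k) - kball 0 (w k)) Filter.atTop
        (nhds (Real.log ((‖1 - ⟪ξ, z⟫‖) ^ 2 / (1 - ‖z‖ ^ 2)))) := by
  intro z hz
  have hquot : Tendsto (fun k => kballQuot z (w k)) atTop (𝓝 (kballQuot z ξ)) :=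
    ((continuous_kballQuot hz).tendsto ξ).comp hwξ
  rw [kballQuot_of_norm_eq_one z hξ] at hquot
  have hA := norm_one_sub_inner_pos hξ.le hz
  have hB := one_sub_sq_pos_of_norm_lt_one hz
  simpa only [kball_sub_kball_zero hz (hw _)] using hquot.log (by positivity)

/-- if wⁿ → ξ with ‖ξ‖ = 1, then for every z in the ball
k(z,wⁿ) − k(0,wⁿ) → log(|1 − ⟨z,ξ⟩|² / (1 − ‖z‖²)). -/
theorem stmt_18 (n : ℕ) (hn : 1 ≤ n)
    (w : ℕ → EuclideanSpace ℂ (Fin n)) (hw : ∀ k, ‖w k‖ < 1)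
    (ξ : EuclideanSpace ℂ (Fin n)) (hξ : ‖ξ‖ = 1)
    (hwξ : Filter.Tendsto w Filter.atTop (nhds ξ)) :
    ∀ z : EuclideanSpace ℂ (Fin n), ‖z‖ < 1 →
      Filter.Tendsto (fun k => kball z (w k) - kball 0 (w k)) Filter.atTop
        (nhds (Real.log ((‖1 - ⟪ξ, z⟫‖) ^ 2 / (1 - ‖z‖ ^ 2)))) :=
  stmt_18_general n w hw ξ hξ hwξ
end
end

section
/- Let n ≥ 1 and let B = {z ∈ ℂ^n : ‖z‖ < 1} be the open Euclidean unit ball. Let ξ, η ∈ ℂ^n with ‖ξ‖ = ‖η‖ = 1 and ξ ≠ η. Then log( (1 + ‖z‖)/(1 − ‖z‖) ) + log( |1 − ⟨z,ξ⟩|² / (1 − ‖z‖²) ) tends to +∞ as z → η with z ∈ B. (This is the computation showing that distinct horofunctions h_ξ ≠ h_η of the ball with the Kobayashi distance are at infinite detour distance.) -/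
open scoped ComplexInnerProductSpace

/-!
Since `1 - ‖z‖² = (1 - ‖z‖)(1 + ‖z‖)`, the sum equals `log ‖1 - ⟪ξ, z⟫‖² - 2 log (1 - ‖z‖)`.
As `z → η` the first term tends to `log ‖1 - ⟪ξ, η⟫‖²`, which is finite because `⟪ξ, η⟫ = 1`
forces `ξ = η` for unit vectors, while `-2 log (1 - ‖z‖) → +∞` since `‖z‖ → 1⁻`.
-/

open Filter Topology

theorem log_one_add_div_one_sub_add_log_div_one_sub_sq {r a : ℝ} (hr₀ : -1 < r) (hr₁ : r < 1)
    (ha : a ≠ 0) :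
    Real.log ((1 + r) / (1 - r)) + Real.log (a / (1 - r ^ 2)) =
      Real.log a - 2 * Real.log (1 - r) := by
  have hsub : 1 - r ≠ 0 := by linarith
  have hadd : 1 + r ≠ 0 := by linarith
  have hsq : 1 - r ^ 2 = (1 - r) * (1 + r) := by ring
  rw [Real.log_div hadd hsub, hsq, Real.log_div ha (mul_ne_zero hsub hadd),
    Real.log_mul hsub hadd]
  ring

theorem tendsto_one_sub_norm_nhdsGT_zero {E : Type*} [SeminormedAddGroup E] {η : E}
    (hη : ‖η‖ = 1) :
    Tendsto (fun z : E => 1 - ‖z‖) (𝓝[{z | ‖z‖ < 1}] η) (𝓝[>] 0) := by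
  refine tendsto_nhdsWithin_of_tendsto_nhds_of_eventually_within _ ?_ ?_
  · have h : Tendsto (fun z : E => 1 - ‖z‖) (𝓝 η) (𝓝 (1 - ‖η‖)) :=
      (continuous_const.sub continuous_norm).tendsto η
    rw [hη, sub_self] at h
    exact h.mono_left nhdsWithin_le_nhds
  · filter_upwards [self_mem_nhdsWithin] with z (hz : ‖z‖ < 1)
    exact sub_pos.mpr hz

theorem tendsto_neg_log_one_sub_norm_atTop {E : Type*} [SeminormedAddGroup E] {η : E}
    (hη : ‖η‖ = 1) :
    Tendsto (fun z : E => -Real.log (1 - ‖z‖)) (𝓝[{z | ‖z‖ < 1}] η) atTop :=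
  tendsto_neg_atBot_atTop.comp
    (Real.tendsto_log_nhdsGT_zero.comp (tendsto_one_sub_norm_nhdsGT_zero hη))

theorem tendsto_log_div_one_sub_norm_add_log_horofunction_atTop {𝕜 E : Type*} [RCLike 𝕜]
    [NormedAddCommGroup E] [InnerProductSpace 𝕜 E] {ξ η : E} (hξ : ‖ξ‖ = 1) (hη : ‖η‖ = 1)
    (hne : ξ ≠ η) :
    Tendsto (fun z : E => Real.log ((1 + ‖z‖) / (1 - ‖z‖)) +
        Real.log (‖1 - inner 𝕜 ξ z‖ ^ 2 / (1 - ‖z‖ ^ 2)))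
      (𝓝[{z | ‖z‖ < 1}] η) atTop := by
  set A : E → ℝ := fun z => ‖1 - inner 𝕜 ξ z‖ ^ 2
  have hAη : 0 < A η := by
    have h : (1 : 𝕜) - inner 𝕜 ξ η ≠ 0 :=
      sub_ne_zero.mpr fun h => hne ((inner_eq_one_iff_of_norm_eq_one hξ hη).mp h.symm)
    positivity
  have hA : Tendsto A (𝓝[{z | ‖z‖ < 1}] η) (𝓝 (A η)) :=
    ((continuous_const.sub (continuous_const.inner continuous_id)).norm.pow 2).continuousAt
      |>.tendsto.mono_left nhdsWithin_le_nhds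
  have hsum : Tendsto (fun z => Real.log (A z) + 2 * -Real.log (1 - ‖z‖))
      (𝓝[{z | ‖z‖ < 1}] η) atTop :=
    ((Real.continuousAt_log hAη.ne').tendsto.comp hA).add_atTop
      ((tendsto_neg_log_one_sub_norm_atTop hη).const_mul_atTop two_pos)
  refine hsum.congr' ?_
  filter_upwards [self_mem_nhdsWithin, hA.eventually (eventually_gt_nhds hAη)]
    with z (hz : ‖z‖ < 1) hAz
  rw [log_one_add_div_one_sub_add_log_div_one_sub_sq (by linarith [norm_nonneg z]) hz hAz.ne']
  ring

/-- Mathlib's `⟪ξ, z⟫ = Σᵢ conj(ξᵢ) zᵢ` is the paper's `⟨z, ξ⟩`. -/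
theorem stmt_19_general (n : ℕ)
    (ξ η : EuclideanSpace ℂ (Fin n)) (hξ : ‖ξ‖ = 1) (hη : ‖η‖ = 1) (hne : ξ ≠ η) :
    Filter.Tendsto
      (fun z : EuclideanSpace ℂ (Fin n) =>
        Real.log ((1 + ‖z‖) / (1 - ‖z‖)) +
          Real.log ((‖1 - ⟪ξ, z⟫‖) ^ 2 / (1 - ‖z‖ ^ 2)))
      (nhdsWithin η {z : EuclideanSpace ℂ (Fin n) | ‖z‖ < 1}) Filter.atTop :=
  tendsto_log_div_one_sub_norm_add_log_horofunction_atTop hξ hη hne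

/-- for ξ ≠ η on the unit sphere of ℂⁿ,
log((1+‖z‖)/(1−‖z‖)) + log(|1 − ⟨z,ξ⟩|²/(1−‖z‖²)) → ∞ as z → η inside the ball
(here `⟪ξ, z⟫ = Σᵢ zᵢ conj(ξᵢ)` is the paper's `⟨z,ξ⟩`). -/
theorem stmt_19 (n : ℕ) (hn : 1 ≤ n)
    (ξ η : EuclideanSpace ℂ (Fin n)) (hξ : ‖ξ‖ = 1) (hη : ‖η‖ = 1) (hne : ξ ≠ η) :
    Filter.Tendsto
      (fun z : EuclideanSpace ℂ (Fin n) =>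
        Real.log ((1 + ‖z‖) / (1 - ‖z‖)) +
          Real.log ((‖1 - ⟪ξ, z⟫‖) ^ 2 / (1 - ‖z‖ ^ 2)))
      (nhdsWithin η {z : EuclideanSpace ℂ (Fin n) | ‖z‖ < 1}) Filter.atTop :=
  stmt_19_general n ξ η hξ hη hne
end
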